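/- A topological space X is normal if and only if for every closed set A and every open set V with A ⊆ V, there exists a Q*g-open set U such that A ⊆ U ⊆ cl(U) ⊆ V. -/

import Mathlib

open Set Topology

def QStarClosed {X : Type*} [TopologicalSpace X] (A : Set X) : Prop :=
  IsClosed A ∧ interior A = ∅

def QStarOpen {X : Type*} [TopologicalSpace X] (A : Set X) : Prop :=
  QStarClosed Aᶜ

def GClosed {X : Type*} [TopologicalSpace X] (A : Set X) : Prop :=
  ∀ U : Set X, IsOpen U → A ⊆ U → closure A ⊆ U

def QStarGClosed {X : Type*} [TopologicalSpace X] (A : Set X) : Prop :=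
  ∀ U : Set X, QStarOpen U → A ⊆ U → closure A ⊆ U

def QStarGOpen {X : Type*} [TopologicalSpace X] (A : Set X) : Prop :=
  QStarGClosed Aᶜ

def QStarNormal (X : Type*) [TopologicalSpace X] : Prop :=
  ∀ A B : Set X, QStarClosed A → QStarClosed B → Disjoint A B →
    ∃ U V : Set X, IsOpen U ∧ IsOpen V ∧ A ⊆ U ∧ B ⊆ V ∧ Disjoint U V

def NormalSp (X : Type*) [TopologicalSpace X] : Prop :=
  ∀ A B : Set X, IsClosed A → IsClosed B → Disjoint A B →
    ∃ U V : Set X, IsOpen U ∧ IsOpen V ∧ A ⊆ U ∧ B ⊆ V ∧ Disjoint U V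

def GNormal (X : Type*) [TopologicalSpace X] : Prop :=
  ∀ A B : Set X, GClosed A → GClosed B → Disjoint A B →
    ∃ U V : Set X, IsOpen U ∧ IsOpen V ∧ A ⊆ U ∧ B ⊆ V ∧ Disjoint U V

/-!
Open sets are Q*g-open, so the shrinkings given by normality qualify. Conversely, for closed `A`
the boundary `frontier A` is closed with empty interior, so `(frontier A)ᶜ` is Q*-open; a Q*g-open
`U ⊇ A` then has `frontier A ⊆ interior U`, hence `A ⊆ interior (A ∪ U)`, an open set whose closure
lies in `A ∪ closure U ⊆ V`, and such open shrinkings characterise normality.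
-/

theorem normalSp_iff_normalSpace {X : Type*} [TopologicalSpace X] : NormalSp X ↔ NormalSpace X :=
  ⟨fun h ↦ ⟨h⟩, fun h ↦ h.normal⟩

theorem NormalSpace.of_exists_closure_subset {X : Type*} [TopologicalSpace X]
    (h : ∀ A V : Set X, IsClosed A → IsOpen V → A ⊆ V → ∃ U, IsOpen U ∧ A ⊆ U ∧ closure U ⊆ V) :
    NormalSpace X where
  normal A B hA hB hAB := by
    obtain ⟨U, hU, hAU, hUB⟩ := h A Bᶜ hA hB.isOpen_compl hAB.subset_compl_right
    exact ⟨U, (closure U)ᶜ, hU, isClosed_closure.isOpen_compl, hAU, subset_compl_comm.mp hUB,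
      disjoint_compl_right.mono_left subset_closure⟩

section QStar

variable {X : Type*} [TopologicalSpace X] {A U : Set X}

theorem IsClosed.qStarGClosed (hA : IsClosed A) : QStarGClosed A := by
  intro V _ hAV
  rwa [hA.closure_eq]

theorem IsOpen.qStarGOpen (hU : IsOpen U) : QStarGOpen U :=
  hU.isClosed_compl.qStarGClosed

theorem IsClosed.qStarClosed_frontier (hA : IsClosed A) : QStarClosed (frontier A) :=
  ⟨isClosed_frontier, interior_frontier hA⟩

theorem QStarGOpen.frontier_subset_interior (hU : QStarGOpen U) (hA : IsClosed A) (hAU : A ⊆ U) :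
    frontier A ⊆ interior U := by
  have hQ : QStarOpen (frontier A)ᶜ := by
    rw [QStarOpen, compl_compl]
    exact hA.qStarClosed_frontier
  have := hU _ hQ (compl_subset_compl.mpr (hA.frontier_subset.trans hAU))
  rwa [closure_compl, compl_subset_compl] at this

theorem QStarGOpen.subset_interior_union (hU : QStarGOpen U) (hA : IsClosed A) (hAU : A ⊆ U) :
    A ⊆ interior (A ∪ U) := by
  intro x hxA
  by_cases hx : x ∈ interior A
  · exact interior_mono subset_union_left hx
  · have hxf : x ∈ frontier A := by
      rw [hA.frontier_eq]
      exact ⟨hxA, hx⟩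
    exact interior_mono subset_union_right (hU.frontier_subset_interior hA hAU hxf)

end QStar

theorem stmt16 {X : Type*} [TopologicalSpace X] :
    NormalSp X ↔
      ∀ A V : Set X, IsClosed A → IsOpen V → A ⊆ V →
        ∃ U : Set X, QStarGOpen U ∧ A ⊆ U ∧ U ⊆ closure U ∧ closure U ⊆ V := by
  rw [normalSp_iff_normalSpace]
  constructor
  · intro _ A V hA hV hAV
    obtain ⟨U, hU, hAU, hUV⟩ := normal_exists_closure_subset hA hV hAV
    exact ⟨U, hU.qStarGOpen, hAU, subset_closure, hUV⟩
  · intro h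
    refine NormalSpace.of_exists_closure_subset fun A V hA hV hAV ↦ ?_
    obtain ⟨U, hU, hAU, -, hUV⟩ := h A V hA hV hAV
    refine ⟨interior (A ∪ U), isOpen_interior, hU.subset_interior_union hA hAU, ?_⟩
    calc closure (interior (A ∪ U)) ⊆ closure (A ∪ U) := closure_mono interior_subset
      _ = A ∪ closure U := by rw [closure_union, hA.closure_eq]
      _ ⊆ V := union_subset hAV hUV
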